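/- For all u in (0,1), φ(Φ⁻¹(u)) ≥ (√2/√π) · min(u, 1−u), where φ is the standard normal density and Φ⁻¹ the standard normal quantile function. -/

import Mathlib

open MeasureTheory Real ProbabilityTheory Filter

/-- Standard normal density. -/
noncomputable def stdNormalPDF (x : ℝ) : ℝ :=
  (Real.sqrt (2 * Real.pi))⁻¹ * Real.exp (-x ^ 2 / 2)

/-- Standard normal cumulative distribution function. -/
noncomputable def stdNormalCDF (z : ℝ) : ℝ := ∫ t in Set.Iic z, stdNormalPDF t

/-- Standard normal quantile function (inverse of the cdf). -/
noncomputable def stdNormalQuantile : ℝ → ℝ := Function.invFun stdNormalCDF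

lemma pdf_eq' : stdNormalPDF = fun x => (Real.sqrt (2 * Real.pi))⁻¹ * Real.exp (-(1/2) * x ^ 2) := by
  funext x
  rw [stdNormalPDF]
  congr 1
  ring

lemma pdf_nonneg (x : ℝ) : 0 ≤ stdNormalPDF x := by
  unfold stdNormalPDF
  positivity

lemma pdf_integrable : Integrable stdNormalPDF := by
  rw [pdf_eq']
  exact (integrable_exp_neg_mul_sq (by norm_num : (0:ℝ) < 1/2)).const_mul _

lemma sqrt_two_pi_eq : Real.sqrt (Real.pi / (1/2)) = Real.sqrt (2 * Real.pi) := by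
  norm_num [mul_comm]

lemma integral_pdf : ∫ x, stdNormalPDF x = 1 := by
  rw [pdf_eq', MeasureTheory.integral_const_mul, integral_gaussian, sqrt_two_pi_eq]
  rw [inv_mul_cancel₀]
  positivity

lemma cdf_zero : stdNormalCDF 0 = 1/2 := by
  have h : (∫ x in Set.Ioi (0:ℝ), stdNormalPDF (-x)) = ∫ x in Set.Iic (-(0:ℝ)), stdNormalPDF x :=
    integral_comp_neg_Ioi 0 stdNormalPDF
  have heq : ∀ x : ℝ, stdNormalPDF (-x) = stdNormalPDF x := by
    intro x; simp [stdNormalPDF]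
  simp only [heq, neg_zero] at h
  rw [stdNormalCDF, ← h, pdf_eq', MeasureTheory.integral_const_mul, integral_gaussian_Ioi,
    sqrt_two_pi_eq]
  have hpos : Real.sqrt (2 * Real.pi) ≠ 0 := by positivity
  rw [← mul_div_assoc, inv_mul_cancel₀ hpos]

lemma cdf_add_compl (x : ℝ) : stdNormalCDF x + ∫ t in Set.Ioi x, stdNormalPDF t = 1 := by
  rw [stdNormalCDF, ← integral_pdf]
  rw [← MeasureTheory.setIntegral_union (Set.Iic_disjoint_Ioi le_rfl) measurableSet_Ioi
      pdf_integrable.integrableOn pdf_integrable.integrableOn, Set.Iic_union_Ioi,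
      MeasureTheory.Measure.restrict_univ]

lemma cdf_neg (x : ℝ) : stdNormalCDF (-x) = 1 - stdNormalCDF x := by
  have h : (∫ t in Set.Ioi x, stdNormalPDF (-t)) = ∫ t in Set.Iic (-x), stdNormalPDF t :=
    integral_comp_neg_Ioi x stdNormalPDF
  have heq : ∀ t : ℝ, stdNormalPDF (-t) = stdNormalPDF t := by
    intro t; simp [stdNormalPDF]
  simp only [heq] at h
  have := cdf_add_compl x
  rw [stdNormalCDF, ← h]
  linarith

lemma cdf_translate (x : ℝ) : (∫ t in Set.Iic x, stdNormalPDF (t - x)) = 1/2 := by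
  have key : ∀ t : ℝ, (Set.Iic x).indicator (fun t => stdNormalPDF (t - x)) t
      = (Set.Iic (0:ℝ)).indicator stdNormalPDF (t - x) := by
    intro t
    by_cases h : t ≤ x
    · rw [Set.indicator_of_mem (Set.mem_Iic.2 h),
        Set.indicator_of_mem (Set.mem_Iic.2 (by linarith))]
    · rw [Set.indicator_of_notMem (by simpa using h),
        Set.indicator_of_notMem (by simp; linarith [lt_of_not_ge h])]
  rw [← MeasureTheory.integral_indicator measurableSet_Iic]
  simp_rw [key]
  rw [MeasureTheory.integral_sub_right_eq_self (fun t => (Set.Iic (0:ℝ)).indicator stdNormalPDF t) x,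
    MeasureTheory.integral_indicator measurableSet_Iic]
  exact cdf_zero

lemma cdf_bound {x : ℝ} (hx : x ≤ 0) : stdNormalCDF x ≤ Real.exp (-x ^ 2 / 2) / 2 := by
  have hmono : stdNormalCDF x ≤ ∫ t in Set.Iic x, Real.exp (-x ^ 2 / 2) * stdNormalPDF (t - x) := by
    rw [stdNormalCDF]
    apply MeasureTheory.setIntegral_mono_on
    · exact pdf_integrable.integrableOn
    · apply MeasureTheory.Integrable.integrableOn
      apply MeasureTheory.Integrable.const_mul
      exact (pdf_integrable.comp_sub_right x)
    · exact measurableSet_Iic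
    · intro t ht
      have ht' : t ≤ x := ht
      have h1 : (t - x) ^ 2 + x ^ 2 ≤ t ^ 2 := by nlinarith
      unfold stdNormalPDF
      rw [mul_comm (Real.exp _) _, mul_assoc, ← Real.exp_add]
      apply mul_le_mul_of_nonneg_left _ (by positivity)
      apply Real.exp_le_exp.2
      nlinarith
  calc stdNormalCDF x ≤ _ := hmono
    _ = Real.exp (-x ^ 2 / 2) * (1/2) := by
        rw [MeasureTheory.integral_const_mul, cdf_translate]
    _ = Real.exp (-x ^ 2 / 2) / 2 := by ring

lemma cdf_cont : Continuous stdNormalCDF := by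
  have h : stdNormalCDF = fun x => stdNormalCDF 0 + ∫ t in (0:ℝ)..x, stdNormalPDF t := by
    funext x
    have := intervalIntegral.integral_Iic_sub_Iic pdf_integrable.integrableOn
      pdf_integrable.integrableOn (a := 0) (b := x)
    rw [stdNormalCDF, stdNormalCDF] at *
    linarith [this]
  rw [h]
  exact continuous_const.add (intervalIntegral.continuous_primitive
    (fun a b => pdf_integrable.intervalIntegrable) 0)

lemma cdf_small {u : ℝ} (hu : 0 < u) : ∃ a : ℝ, a ≤ 0 ∧ stdNormalCDF a ≤ u := by
  refine ⟨-Real.sqrt (2 * |Real.log (2 * u)|), neg_nonpos.2 (Real.sqrt_nonneg _), ?_⟩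
  have h2u : 0 < 2 * u := by linarith
  have hsq : (-Real.sqrt (2 * |Real.log (2 * u)|)) ^ 2 = 2 * |Real.log (2 * u)| := by
    rw [neg_pow, Real.sq_sqrt (by positivity)]
    ring
  calc stdNormalCDF _ ≤ Real.exp (-(-Real.sqrt (2 * |Real.log (2 * u)|)) ^ 2 / 2) / 2 :=
        cdf_bound (neg_nonpos.2 (Real.sqrt_nonneg _))
    _ ≤ u := by
        rw [hsq, div_le_iff₀ (by norm_num)]
        have : Real.exp (-(2 * |Real.log (2 * u)|) / 2) ≤ Real.exp (Real.log (2 * u)) := by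
          apply Real.exp_le_exp.2
          have := abs_nonneg (Real.log (2 * u))
          have := neg_abs_le (Real.log (2 * u))
          linarith
        rw [Real.exp_log h2u] at this
        linarith

lemma cdf_surj {u : ℝ} (hu : u ∈ Set.Ioo (0:ℝ) 1) : ∃ x, stdNormalCDF x = u := by
  obtain ⟨a, ha0, ha⟩ := cdf_small hu.1
  obtain ⟨a', ha'0, ha'⟩ := cdf_small (by linarith [hu.2] : (0:ℝ) < 1 - u)
  have hb : u ≤ stdNormalCDF (-a') := by
    rw [cdf_neg]; linarith
  have hab : a ≤ -a' := by linarith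
  have := intermediate_value_Icc hab cdf_cont.continuousOn
  obtain ⟨x, _, hx⟩ := this ⟨ha, hb⟩
  exact ⟨x, hx⟩

theorem stmt2 :
    ∀ u ∈ Set.Ioo (0 : ℝ) 1,
      stdNormalPDF (stdNormalQuantile u) ≥
        (Real.sqrt 2 / Real.sqrt Real.pi) * min u (1 - u) := by
  intro u hu
  obtain ⟨x, hx⟩ := cdf_surj hu
  have hq : stdNormalCDF (stdNormalQuantile u) = u :=
    Function.invFun_eq ⟨x, hx⟩
  set y := stdNormalQuantile u with hy
  have key : min u (1 - u) ≤ Real.exp (-y ^ 2 / 2) / 2 := by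
    rcases le_total y 0 with h | h
    · calc min u (1 - u) ≤ u := min_le_left _ _
        _ = stdNormalCDF y := hq.symm
        _ ≤ _ := cdf_bound h
    · have hneg : stdNormalCDF (-y) = 1 - u := by rw [cdf_neg, hq]
      calc min u (1 - u) ≤ 1 - u := min_le_right _ _
        _ = stdNormalCDF (-y) := hneg.symm
        _ ≤ Real.exp (-(-y) ^ 2 / 2) / 2 := cdf_bound (by linarith)
        _ = Real.exp (-y ^ 2 / 2) / 2 := by rw [neg_pow]; ring_nf
  have hconst : (Real.sqrt 2 / Real.sqrt Real.pi) * (Real.exp (-y ^ 2 / 2) / 2)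
      = stdNormalPDF y := by
    unfold stdNormalPDF
    rw [Real.sqrt_mul (by norm_num : (0:ℝ) ≤ 2)]
    have h2 : Real.sqrt 2 * Real.sqrt 2 = 2 := Real.mul_self_sqrt (by norm_num)
    have hpi : Real.sqrt Real.pi > 0 := Real.sqrt_pos.2 Real.pi_pos
    field_simp
    linear_combination h2
  calc stdNormalPDF y = (Real.sqrt 2 / Real.sqrt Real.pi) * (Real.exp (-y ^ 2 / 2) / 2) :=
        hconst.symm
    _ ≥ (Real.sqrt 2 / Real.sqrt Real.pi) * min u (1 - u) := by
        apply mul_le_mul_of_nonneg_left key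
        positivity
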